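/- For every infinite cardinal λ, every ordinal β < ε₀, and all positive integers m and d, there exists a cardinal κ > λ such that for every commutative semigroup (G,+) of cardinality κ and every coloring f : G → d, there exist a subset H ⊆ G of cardinality λ and an ω^β-large set B of positive integers with min(B) ≥ m such that FS^B(H) is monochromatic — assuming the Bigorajska–Kotlarski theorem that whenever an ω^β·(d+1)-large set is partitioned into d pieces, one piece is ω^β-large, together with the Erdős–Rado theorem. -/

import Mathlib

open Cardinal

universe u

/-- Sum of a nonempty tuple of elements of a commutative semigroup. -/
def tupSum {G : Type u} [AddCommSemigroup G] : {n : ℕ} → (Fin (n + 1) → G) → G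
  | 0, g => g 0
  | _ + 1, g => tupSum (fun i => g i.castSucc) + g (Fin.last _)

/-- `FSMono f A H i` : all sums of `j`-many pairwise distinct elements of `H`,
for `j ∈ A`, have color `i` under `f` (i.e. `FS^A(H)` is monochromatic of color `i`). -/
def FSMono {G : Type u} [AddCommSemigroup G] {c : ℕ} (f : G → Fin c)
    (A : Set ℕ) (H : Set G) (i : Fin c) : Prop :=
  ∀ m : ℕ, m + 1 ∈ A → ∀ g : Fin (m + 1) → G, Function.Injective g →
    (∀ j, g j ∈ H) → f (tupSum g) = i

/-- ε₀ : the least fixed point of x ↦ ω^x. -/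
noncomputable def eps0 : Ordinal.{0} := Ordinal.nfp (fun x => Ordinal.omega0 ^ x) 0

/-!
Colour each finite subset of `G` by the colour of its sum. Let `B₀` be an `ω^β·(d+1)`-large set
above `m`. The Erdős–Rado theorem, in the form "for every `n` there is `κ > λ` such that every
colouring of the finite subsets of a set of size `κ` has a homogeneous set of size `λ` for all sizes
`≤ n`", applied with `n = max B₀`, gives `H` of size `λ` on which all `k`-sums share one colour
`p k` for every `k ∈ B₀`. The Bigorajska–Kotlarski theorem applied to `p` then yields an
`ω^β`-large subset of `B₀` on which `p` is constant.

Erdős–Rado is proved by induction on `n`. Given `ν` for `n`, let `κ = (2^ν)⁺`, take a set `C` of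
size `2^ν` such that every type over a subset `S ⊆ C` of size `≤ ν` that is realized outside `S`
is realized in `C` outside `S`, a point `a ∉ C`, and a sequence of length `ν` in `C` each of
whose terms has the same type as `a` over its predecessors.
On this sequence the colour of a set is determined by the colour, with `a` adjoined, of the set
minus its largest element, so the induction hypothesis for the pair of colourings `t ↦ c t` and
`t ↦ c (insert a t)` gives the step.
-/

open Set

theorem mk_sUnion_le_of_le {α : Type*} {κ : Cardinal} (hκ : ℵ₀ ≤ κ) {𝒜 : Set (Set α)}
    (h𝒜 : #𝒜 ≤ κ) (h : ∀ A ∈ 𝒜, #A ≤ κ) : #(⋃₀ 𝒜) ≤ κ :=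
  (mk_sUnion_le 𝒜).trans <|
    (mul_le_mul' h𝒜 (ciSup_le' fun A : 𝒜 => h A.1 A.2)).trans (mul_eq_self hκ).le

theorem mk_finset_le_of_le {α : Type*} {κ : Cardinal} (hκ : ℵ₀ ≤ κ) (h : #α ≤ κ) :
    #(Finset α) ≤ κ := by
  rcases finite_or_infinite α with hα | hα
  · exact (lt_aleph0_of_finite _).le.trans hκ
  · rwa [mk_finset_of_infinite]

theorem exists_lt_of_mk_lt {κ : Cardinal} (hκ : κ.IsRegular) {s : Set κ.ord.ToType}
    (hs : #s < κ) : ∃ i, ∀ j ∈ s, j < i :=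
  not_isCofinal_iff.1 fun h => (Order.cof_le h).not_gt <| by
    rwa [Ordinal.cof_toType, hκ.cof_ord]

noncomputable def transfiniteSeq {α ι : Type*} [LinearOrder ι] [WellFoundedLT ι]
    (next : Set α → α) : ι → α :=
  wellFounded_lt.fix fun i prev => next (range fun j : Iio i => prev j j.2)

theorem transfiniteSeq_eq {α ι : Type*} [LinearOrder ι] [WellFoundedLT ι] (next : Set α → α)
    (i : ι) : transfiniteSeq next i = next (transfiniteSeq next '' Iio i) := by
  rw [transfiniteSeq, WellFounded.fix_eq, image_eq_range]

section SumColor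

variable {G : Type u} [AddCommSemigroup G]

theorem coe_tupSum : ∀ {n : ℕ} (g : Fin (n + 1) → G),
    ((tupSum g : G) : WithZero G) = ∑ i, (g i : WithZero G)
  | 0, g => by simp [tupSum]
  | n + 1, g => by
    rw [tupSum, WithZero.coe_add, coe_tupSum,
      Fin.sum_univ_castSucc (f := fun i => (g i : WithZero G))]

/-- A semigroup has no empty sum, so the sum is taken in `WithZero G`; the empty set gets the
dummy colour `i₀`. -/
noncomputable def sumColor {d : ℕ} (i₀ : Fin d) (f : G → Fin d) (s : Finset G) : Fin d :=
  WithZero.recZeroCoe i₀ f (∑ x ∈ s, (x : WithZero G))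

theorem sumColor_map {d : ℕ} (i₀ : Fin d) (f : G → Fin d) {n : ℕ} {g : Fin (n + 1) → G}
    (hg : Function.Injective g) : sumColor i₀ f (Finset.univ.map ⟨g, hg⟩) = f (tupSum g) := by
  rw [sumColor, Finset.sum_map, ← coe_tupSum]
  rfl

end SumColor

section Homogeneous

variable {X Y P : Type*}

def IsHomogeneous (c : Finset X → P) (n : ℕ) (S : Set X) : Prop :=
  ∀ s t : Finset X, ↑s ⊆ S → ↑t ⊆ S → s.card = t.card → s.card ≤ n → c s = c t

theorem IsHomogeneous.image [DecidableEq X] {c : Finset X → P} {n : ℕ} {S : Set Y} {e : Y → X}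
    (he : Function.Injective e) (h : IsHomogeneous (fun t => c (t.image e)) n S) :
    IsHomogeneous c n (e '' S) := by
  intro s t hs ht hst hsn
  obtain ⟨s', hs', rfl⟩ := Finset.subset_set_image_iff.1 hs
  obtain ⟨t', ht', rfl⟩ := Finset.subset_set_image_iff.1 ht
  simp only [Finset.card_image_of_injective _ he] at hst hsn
  exact h s' t' hs' ht' hst hsn

theorem IsHomogeneous.succ [LinearOrder Y] {c d : Finset Y → P} {n : ℕ} {S : Set Y}
    (hcd : ∀ γ (u : Finset Y), (∀ β ∈ u, β < γ) → c (insert γ u) = d u)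
    (h : IsHomogeneous (fun t => (c t, d t)) n S) : IsHomogeneous c (n + 1) S := by
  have hmax : ∀ s : Finset Y, (hs : s.Nonempty) → c s = d (s.erase (s.max' hs)) := by
    intro s hs
    conv_lhs => rw [← Finset.insert_erase (s.max'_mem hs)]
    exact hcd _ _ fun β hβ =>
      (s.le_max' β (Finset.mem_of_mem_erase hβ)).lt_of_ne (Finset.ne_of_mem_erase hβ)
  intro s t hs ht hst hsn
  rcases hsn.lt_or_eq with hlt | hsn
  · exact congrArg Prod.fst (h s t hs ht hst (Nat.lt_succ_iff.1 hlt))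
  · have hs₀ : s.Nonempty := Finset.card_pos.1 (by omega)
    have ht₀ : t.Nonempty := Finset.card_pos.1 (by omega)
    rw [hmax s hs₀, hmax t ht₀]
    refine congrArg Prod.snd (h _ _ (subset_trans (by simp) hs) (subset_trans (by simp) ht) ?_ ?_)
      <;> simp only [Finset.card_erase_of_mem (Finset.max'_mem _ _)] <;> omega

end Homogeneous

section TypeClosure

variable {X P : Type u} [DecidableEq X]

def SameTypeOver (c : Finset X → P) (S : Set X) (y z : X) : Prop :=
  ∀ u : Finset X, ↑u ⊆ S → c (insert y u) = c (insert z u)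

def TypeClosed (ν : Cardinal) (c : Finset X → P) (C : Set X) : Prop :=
  ∀ S ⊆ C, #S ≤ ν → ∀ y ∉ S, ∃ z ∈ C, z ∉ S ∧ SameTypeOver c S z y

theorem exists_sameTypeOver_realizers [Finite P] (c : Finset X → P) {ν : Cardinal}
    (hν : ℵ₀ ≤ ν) {S : Set X} (hS : #S ≤ ν) :
    ∃ R : Set X, #R ≤ 2 ^ ν ∧ ∀ y ∉ S, ∃ z ∈ R, z ∉ S ∧ SameTypeOver c S z y := by
  classical
  let τ : X → Finset S → P := fun y u => c (insert y (u.map (Function.Embedding.subtype _)))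
  obtain ⟨R, hRS, hR⟩ := exists_subset_bijOn Sᶜ τ
  refine ⟨R, ?_, fun y hy => ?_⟩
  · calc #R = #(τ '' R) := (mk_image_eq_of_injOn _ _ hR.injOn).symm
      _ ≤ #(Finset S → P) := mk_set_le _
      _ = #P ^ #(Finset S) := (power_def _ _).symm
      _ ≤ ν ^ ν := (power_le_power_right ((lt_aleph0_of_finite P).le.trans hν)).trans
          (power_le_power_left (aleph0_pos.trans_le hν).ne' (mk_finset_le_of_le hν hS))
      _ = 2 ^ ν := power_self_eq hν
  · obtain ⟨z, hzR, hzy⟩ := hR.surjOn ⟨y, hy, rfl⟩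
    refine ⟨z, hzR, hRS hzR, fun u hu => ?_⟩
    have hu' : ∀ x ∈ u, x ∈ S := fun x hx => hu hx
    simpa [τ, Finset.subtype_map_of_mem hu'] using congrFun hzy (u.subtype (· ∈ S))

theorem exists_typeClosed [Finite P] (c : Finset X → P) {ν : Cardinal.{u}} (hν : ℵ₀ ≤ ν) :
    ∃ C : Set X, #C ≤ 2 ^ ν ∧ TypeClosed ν c C := by
  have h2ν : ℵ₀ ≤ 2 ^ ν := hν.trans (cantor ν).le
  have hR : ∀ S : Set X, ∃ R : Set X, #R ≤ 2 ^ ν ∧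
      (#S ≤ ν → ∀ y ∉ S, ∃ z ∈ R, z ∉ S ∧ SameTypeOver c S z y) := fun S =>
    if hS : #S ≤ ν then
      (exists_sameTypeOver_realizers c hν hS).imp fun _ h => ⟨h.1, fun _ => h.2⟩
    else ⟨∅, by simp, fun h => absurd h hS⟩
  choose R hRcard hR using hR
  -- `C` is the union of a chain of length `ν⁺`; by regularity of `ν⁺`, each `S ⊆ C` with `#S ≤ ν`
  -- lies in an earlier stage, so the next stage contains its realizers.
  let F : Set X → Set X := fun B => ⋃₀ (R '' {S | S ⊆ B ∧ #S ≤ ν})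
  have hF : ∀ B : Set X, #B ≤ 2 ^ ν → #(F B) ≤ 2 ^ ν := fun B hB =>
    mk_sUnion_le_of_le h2ν (mk_image_le.trans <| (mk_bounded_subset_le B ν).trans <|
        (power_le_power_right (max_le hB h2ν)).trans <| by rw [← power_mul, mul_eq_self hν])
      (forall_mem_image.2 fun S _ => hRcard S)
  let A : (Order.succ ν).ord.ToType → Set X := transfiniteSeq fun 𝒜 => F (⋃₀ 𝒜)
  have hA : ∀ i, #(A i) ≤ 2 ^ ν := by
    intro i
    induction i using WellFoundedLT.induction with
    | _ i ih =>
      rw [show A i = _ from transfiniteSeq_eq _ i]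
      refine hF _ (mk_sUnion_le_of_le h2ν (mk_image_le.trans ?_) (forall_mem_image.2 ih))
      exact (Order.lt_succ_iff.1 ((mk_Iio_lt i (by simp)).trans_eq (mk_ord_toType _))).trans
        (cantor ν).le
  refine ⟨⋃ i, A i, ?_, ?_⟩
  · rw [← sUnion_range]
    refine mk_sUnion_le_of_le h2ν (mk_range_le.trans ?_) (forall_mem_range.2 hA)
    rw [mk_ord_toType]
    exact Order.succ_le_of_lt (cantor ν)
  · intro S hSC hSν y hy
    choose idx hidx using fun s : S => mem_iUnion.1 (hSC s.2)
    obtain ⟨i, hi⟩ := exists_lt_of_mk_lt (isRegular_succ hν) (s := range idx)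
      (mk_range_le.trans_lt (hSν.trans_lt (Order.lt_succ ν)))
    obtain ⟨z, hzR, hzS, hz⟩ := hR S hSν y hy
    refine ⟨z, mem_iUnion.2 ⟨i, ?_⟩, hzS, hz⟩
    rw [show A i = _ from transfiniteSeq_eq _ i]
    refine ⟨R S, ⟨S, ⟨fun s hs => ?_, hSν⟩, rfl⟩, hzR⟩
    exact ⟨A (idx ⟨s, hs⟩), ⟨idx ⟨s, hs⟩, hi _ (mem_range_self _), rfl⟩, hidx ⟨s, hs⟩⟩

theorem TypeClosed.exists_embedding {c : Finset X → P} {ν : Cardinal.{u}} {C : Set X}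
    (hC : TypeClosed ν c C) {a : X} (ha : a ∉ C) :
    ∃ x : ν.ord.ToType ↪ X, ∀ γ, SameTypeOver c (x '' Iio γ) (x γ) a := by
  -- Working over `S ∩ C` makes the choice of the next term total in `S`; the initial segments of
  -- the sequence lie in `C`, so nothing is lost there.
  have hC' : ∀ S : Set X, #S ≤ ν → ∃ z ∈ C, z ∉ S ∧ SameTypeOver c (S ∩ C) z a := by
    intro S hS
    obtain ⟨z, hzC, hzS, hz⟩ := hC (S ∩ C) inter_subset_right
      ((mk_le_mk_of_subset inter_subset_left).trans hS) a fun h => ha h.2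
    exact ⟨z, hzC, fun h => hzS ⟨h, hzC⟩, hz⟩
  have : Nonempty X := ⟨a⟩
  choose! next hnextC hnextS hnext using hC'
  let x : ν.ord.ToType → X := transfiniteSeq next
  have hx : ∀ γ, x γ = next (x '' Iio γ) := transfiniteSeq_eq next
  have hsmall : ∀ γ, #(x '' Iio γ) ≤ ν := fun γ =>
    mk_image_le.trans ((mk_Iio_lt γ (by simp)).trans_eq (mk_ord_toType ν)).le
  have hxC : ∀ γ, x γ ∈ C := fun γ => hx γ ▸ hnextC _ (hsmall γ)
  have hinter : ∀ γ, x '' Iio γ ∩ C = x '' Iio γ := fun γ =>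
    inter_eq_left.2 (image_subset_iff.2 fun β _ => hxC β)
  have hinj : Function.Injective x := by
    refine Function.Injective.of_lt_imp_ne fun β γ hβγ hx' => hnextS _ (hsmall γ) ?_
    rw [← hx γ, ← hx']
    exact mem_image_of_mem x hβγ
  refine ⟨⟨x, hinj⟩, fun γ => ?_⟩
  have := hnext _ (hsmall γ)
  rwa [← hx γ, hinter γ] at this

end TypeClosure

theorem erdosRado (n : ℕ) {l : Cardinal.{u}} (hl : ℵ₀ ≤ l) :
    ∃ κ : Cardinal.{u}, l < κ ∧ ∀ (X : Type u), κ ≤ #X → ∀ (P : Type u) [Finite P]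
      (c : Finset X → P), ∃ S : Set X, #S = l ∧ IsHomogeneous c n S := by
  induction n with
  | zero =>
    refine ⟨Order.succ l, Order.lt_succ l, fun X hX P _ c => ?_⟩
    obtain ⟨S, hS⟩ := le_mk_iff_exists_set.1 ((Order.le_succ l).trans hX)
    refine ⟨S, hS, fun s t _ _ hst hs => ?_⟩
    rw [Finset.card_eq_zero.1 (Nat.le_zero.1 hs),
      Finset.card_eq_zero.1 (show t.card = 0 by omega)]
  | succ n ih =>
    obtain ⟨ν, hlν, hν⟩ := ih
    refine ⟨Order.succ (2 ^ ν), (hlν.trans (cantor ν)).trans (Order.lt_succ _),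
      fun X hX P _ c => ?_⟩
    classical
    obtain ⟨C, hCcard, hC⟩ := exists_typeClosed c (hl.trans hlν.le)
    obtain ⟨a, ha⟩ : Cᶜ.Nonempty := nonempty_compl.2 fun hCX =>
      (hCcard.trans_lt ((Order.lt_succ _).trans_le hX)).ne (hCX ▸ mk_univ)
    obtain ⟨x, hx⟩ := hC.exists_embedding ha
    obtain ⟨S, hS, hSc⟩ := hν ν.ord.ToType (mk_ord_toType ν).ge (P × P)
      fun t => (c (t.image x), c (insert a (t.image x)))
    refine ⟨x '' S, (mk_image_eq x.injective).trans hS,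
      IsHomogeneous.image x.injective (IsHomogeneous.succ (fun γ u hu => ?_) hSc)⟩
    rw [Finset.image_insert]
    exact hx γ _ (by rw [Finset.coe_image]; exact image_mono fun β hβ => hu β hβ)

theorem fsMono_of_isHomogeneous {G : Type u} [AddCommSemigroup G] {d N : ℕ} {i₀ : Fin d}
    {f : G → Fin d} {H : Set G} (hH : IsHomogeneous (sumColor i₀ f) N H) {B : Finset ℕ}
    (hBN : ∀ k ∈ B, k ≤ N) {i : Fin d}
    (hBi : ∀ k ∈ B, ∃ s : Finset G, ↑s ⊆ H ∧ s.card = k ∧ sumColor i₀ f s = i) :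
    FSMono f ↑B H i := by
  intro k hk g hg hgH
  obtain ⟨s, hsH, hs, rfl⟩ := hBi _ hk
  rw [← sumColor_map i₀ f hg]
  refine hH _ s ?_ hsH (by simp [hs]) (by simpa using hBN _ hk)
  simpa [Set.subset_def] using hgH

/-- Conditional on the Bigorajska–Kotlarski partition theorem, stated for an abstract
largeness predicate `IsLarge`, and on the existence of `α`-large sets above any bound. -/
theorem stmt13_general (IsLarge : Ordinal.{0} → Finset ℕ → Prop)
    (hBK : ∀ β : Ordinal.{0}, β < eps0 → ∀ d : ℕ, 0 < d →
      ∀ (B : Finset ℕ) (p : ℕ → Fin d),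
        IsLarge (Ordinal.omega0 ^ β * (d + 1 : ℕ)) B →
          ∃ j : Fin d, IsLarge (Ordinal.omega0 ^ β) (B.filter fun k => p k = j))
    (hEx : ∀ (α : Ordinal.{0}) (m : ℕ),
      ∃ B : Finset ℕ, IsLarge α B ∧ ∀ k ∈ B, m ≤ k ∧ 0 < k)
    (l : Cardinal.{u}) (hl : ℵ₀ ≤ l) (β : Ordinal.{0}) (hβ : β < eps0)
    (m d : ℕ) (hd : 0 < d) :
    ∃ κ : Cardinal.{u}, l < κ ∧
      ∀ (G : Type u) [AddCommSemigroup G], #G = κ → ∀ f : G → Fin d,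
        ∃ H : Set G, #H = l ∧ ∃ B : Finset ℕ,
          IsLarge (Ordinal.omega0 ^ β) B ∧ (∀ k ∈ B, m ≤ k ∧ 0 < k) ∧
          ∃ i : Fin d, FSMono f ↑B H i := by
  obtain ⟨B, hB, hBm⟩ := hEx (Ordinal.omega0 ^ β * (d + 1 : ℕ)) m
  obtain ⟨κ, hlκ, hκ⟩ := erdosRado (B.sup id) hl
  refine ⟨κ, hlκ, fun G _ hG f => ?_⟩
  let c := sumColor ⟨0, hd⟩ f
  obtain ⟨H, hH, hHc⟩ := hκ G hG.ge (ULift (Fin d)) fun s => ULift.up (c s)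
  have hHinf : H.Infinite := infinite_coe_iff.1 (aleph0_le_mk_iff.1 (hH ▸ hl))
  choose sub hsubH hsub using hHinf.exists_subset_card_eq
  obtain ⟨i, hi⟩ := hBK β hβ d hd B (fun k => c (sub k)) hB
  refine ⟨H, hH, _, hi, fun k hk => hBm k (Finset.mem_filter.1 hk).1, i, ?_⟩
  refine fsMono_of_isHomogeneous
    (fun s t hs ht hst hsN => ULift.up_injective (hHc s t hs ht hst hsN))
    (fun k hk => Finset.le_sup (f := id) (Finset.mem_filter.1 hk).1)
    fun k hk => ⟨sub k, hsubH k, hsub k, (Finset.mem_filter.1 hk).2⟩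

/-- Hindman-type theorem with ω^β-large exponent set, conditional on the
Bigorajska–Kotlarski partition theorem for α-large sets of positive integers
(stated for an abstract largeness predicate `IsLarge`, together with the basic
fact that α-large sets with arbitrarily large minimum exist). -/
theorem stmt13 (IsLarge : Ordinal.{0} → Finset ℕ → Prop)
    (hBK : ∀ β : Ordinal.{0}, β < eps0 → ∀ d : ℕ, 0 < d →
      ∀ (B : Finset ℕ) (p : ℕ → Fin d),
        IsLarge (Ordinal.omega0 ^ β * (d + 1 : ℕ)) B →
          ∃ j : Fin d, IsLarge (Ordinal.omega0 ^ β) (B.filter fun k => p k = j))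
    (hEx : ∀ (α : Ordinal.{0}) (m : ℕ),
      ∃ B : Finset ℕ, IsLarge α B ∧ ∀ k ∈ B, m ≤ k ∧ 0 < k)
    (l : Cardinal.{u}) (hl : ℵ₀ ≤ l) (β : Ordinal.{0}) (hβ : β < eps0)
    (m d : ℕ) (hm : 0 < m) (hd : 0 < d) :
    ∃ κ : Cardinal.{u}, l < κ ∧
      ∀ (G : Type u) [AddCommSemigroup G], #G = κ → ∀ f : G → Fin d,
        ∃ H : Set G, #H = l ∧ ∃ B : Finset ℕ,
          IsLarge (Ordinal.omega0 ^ β) B ∧ (∀ k ∈ B, m ≤ k ∧ 0 < k) ∧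
          ∃ i : Fin d, FSMono f ↑B H i :=
  stmt13_general IsLarge hBK hEx l hl β hβ m d hd
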